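/- Let D = {z ∈ ℂ : |z| < 1} be the Poincaré disk with hyperbolic metric dist(z,w) = arctanh |(z − w)/(1 − z̄w)| (up to the standard normalization). For any two distinct points x, y on the unit circle, the hyperbolic midpoint m(r) of the points rx and ry (the unique point of D equidistant from rx and ry lying on the hyperbolic segment joining them) converges, as r → 1⁻ along (0,1), to a point of the open disk D. -/

import Mathlib

open Set Filter Topology Complex

/-- The inverse hyperbolic tangent. -/
noncomputable def arctanh (t : ℝ) : ℝ := (1 / 2) * Real.log ((1 + t) / (1 - t))

/-- The hyperbolic distance in the Poincaré disk model. -/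
noncomputable def poincareDist (z w : ℂ) : ℝ :=
  arctanh (‖(z - w) / (1 - (starRingEnd ℂ) z * w)‖)

/-!
The midpoint `m` of `a` and `b` is characterised by `φ_m(a) = -φ_m(b)`, where
`φ_m(z) = (m - z) / (1 - m̄ z)` is the involutive disk automorphism exchanging `m` and `0`:
since `φ_m` preserves the pseudo-hyperbolic distance `ρ`, the points `φ_m(a)`, `φ_m(b)` have
a common modulus `t` and `ρ(φ_m(a), φ_m(b)) = 2t / (1 + t²)`, which forces them to be antipodal.
For `a = r x`, `b = r y` this is a linear equation in `m` and `m̄`, whose only solution in the disk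
is `m(r) = r (x + y) / (1 + r² + √((1 + r²)² - r² |x + y|²))`. This formula is continuous in `r`,
and at `r = 1` it equals `(x + y) / (2 + |x - y|)`, which lies in the disk since `|x + y| ≤ 2`.
-/

open ComplexConjugate

theorem arctanh_add {u v : ℝ} (hu : u ∈ Ioo (-1) 1) (hv : v ∈ Ioo (-1) 1) :
    arctanh u + arctanh v = arctanh ((u + v) / (1 + u * v)) := by
  obtain ⟨hu₁, hu₂⟩ := hu
  obtain ⟨hv₁, hv₂⟩ := hv
  have huv : 1 + u * v ≠ 0 := by nlinarith
  have hfrac : (1 + (u + v) / (1 + u * v)) / (1 - (u + v) / (1 + u * v))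
      = (1 + u) / (1 - u) * ((1 + v) / (1 - v)) := by
    rw [one_add_div huv, one_sub_div huv, div_div_div_cancel_right₀ huv, div_mul_div_comm]
    congr 1 <;> ring
  have hu : (1 + u) / (1 - u) ≠ 0 := (div_pos (by linarith) (by linarith)).ne'
  have hv : (1 + v) / (1 - v) ≠ 0 := (div_pos (by linarith) (by linarith)).ne'
  rw [arctanh, arctanh, arctanh, hfrac, Real.log_mul hu hv]
  ring

theorem arctanh_strictMonoOn : StrictMonoOn arctanh (Ioo (-1) 1) := by
  rintro u ⟨hu₁, hu₂⟩ v ⟨hv₁, hv₂⟩ huv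
  have hpos : 0 < (1 + u) / (1 - u) := div_pos (by linarith) (by linarith)
  have hlt : (1 + u) / (1 - u) < (1 + v) / (1 - v) := by
    rw [div_lt_div_iff₀ (by linarith) (by linarith)]
    nlinarith
  rw [arctanh, arctanh]
  linarith [Real.log_lt_log hpos hlt]

theorem add_div_one_add_mul_mem_Ioo {u v : ℝ} (hu : u ∈ Ioo (-1) 1) (hv : v ∈ Ioo (-1) 1) :
    (u + v) / (1 + u * v) ∈ Ioo (-1) 1 := by
  obtain ⟨hu₁, hu₂⟩ := hu
  obtain ⟨hv₁, hv₂⟩ := hv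
  have huv : 0 < 1 + u * v := by nlinarith
  rw [mem_Ioo, lt_div_iff₀ huv, div_lt_one huv]
  constructor <;> nlinarith

/-- The disk automorphism `φ_c`; by definition `poincareDist z w = arctanh ‖mobius z w‖`. -/
noncomputable def mobius (c z : ℂ) : ℂ := (c - z) / (1 - conj c * z)

theorem one_sub_conj_mul_ne_zero {z w : ℂ} (hz : ‖z‖ < 1) (hw : ‖w‖ ≤ 1) :
    1 - conj z * w ≠ 0 := by
  rw [sub_ne_zero]
  intro h
  have : ‖conj z * w‖ < 1 := by
    rw [norm_mul, norm_conj]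
    exact mul_lt_one_of_nonneg_of_lt_one_left (norm_nonneg z) hz hw
  simp [← h] at this

theorem norm_one_sub_mul_conj (z w : ℂ) : ‖1 - z * conj w‖ = ‖1 - conj z * w‖ := by
  rw [← norm_conj]
  simp [mul_comm]

theorem norm_mobius_comm (z w : ℂ) : ‖mobius z w‖ = ‖mobius w z‖ := by
  rw [mobius, mobius, norm_div, norm_div, norm_sub_rev, ← norm_one_sub_mul_conj, mul_comm]

theorem normSq_one_sub_conj_mul_sub_normSq_sub (z w : ℂ) :
    normSq (1 - conj z * w) - normSq (z - w) = (1 - normSq z) * (1 - normSq w) := by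
  rw [normSq_sub, normSq_sub, normSq_one, normSq_mul, normSq_conj]
  simp only [one_mul, map_mul, conj_conj, mul_re, conj_re, conj_im]
  ring

theorem normSq_lt_one {z : ℂ} (hz : ‖z‖ < 1) : normSq z < 1 := by
  rw [← Complex.sq_norm]
  exact pow_lt_one₀ (norm_nonneg z) hz two_ne_zero

theorem norm_mobius_lt_one {c z : ℂ} (hc : ‖c‖ < 1) (hz : ‖z‖ < 1) : ‖mobius c z‖ < 1 := by
  have hden := one_sub_conj_mul_ne_zero hc hz.le
  rw [mobius, norm_div, div_lt_one (norm_pos_iff.mpr hden), ← sq_lt_sq₀ (norm_nonneg _)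
    (norm_nonneg _), Complex.sq_norm, Complex.sq_norm, ← sub_pos,
    normSq_one_sub_conj_mul_sub_normSq_sub]
  exact mul_pos (sub_pos.mpr (normSq_lt_one hc)) (sub_pos.mpr (normSq_lt_one hz))

theorem norm_mobius_mem_Ioo {c z : ℂ} (hc : ‖c‖ < 1) (hz : ‖z‖ < 1) :
    ‖mobius c z‖ ∈ Ioo (-1) 1 :=
  ⟨by linarith [norm_nonneg (mobius c z)], norm_mobius_lt_one hc hz⟩

theorem mobius_mobius {c z w : ℂ} (hc : ‖c‖ < 1) (hz : ‖z‖ < 1) (hw : ‖w‖ < 1) :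
    mobius (mobius c z) (mobius c w) = -mobius z w * ((1 - c * conj z) / (1 - conj c * z)) := by
  have hcz := one_sub_conj_mul_ne_zero hc hz.le
  have hcw := one_sub_conj_mul_ne_zero hc hw.le
  have hzw := one_sub_conj_mul_ne_zero hz hw.le
  have hcc := one_sub_conj_mul_ne_zero hc hc.le
  have hcz' : 1 - c * conj z ≠ 0 := by
    rw [← norm_ne_zero_iff, norm_one_sub_mul_conj]; exact norm_ne_zero_iff.mpr hcz
  have hsub : mobius c z - mobius c w
      = (1 - conj c * c) * (w - z) / ((1 - conj c * z) * (1 - conj c * w)) := by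
    rw [mobius, mobius, div_sub_div _ _ hcz hcw]
    congr 1
    ring
  have hone : 1 - conj (mobius c z) * mobius c w
      = (1 - conj c * c) * (1 - conj z * w) / ((1 - c * conj z) * (1 - conj c * w)) := by
    rw [mobius, mobius, map_div₀, div_mul_div_comm, one_sub_div]
    · simp only [map_sub, map_one, map_mul, conj_conj]
      congr 1
      ring
    · simpa only [map_sub, map_one, map_mul, conj_conj] using mul_ne_zero hcz' hcw
  conv_lhs => rw [mobius]
  rw [hsub, hone, mobius, div_div_div_eq, neg_mul, div_mul_div_comm,
    ← neg_div, div_eq_div_iff (by simp [*]) (by simp [*])]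
  ring

theorem norm_mobius_mobius {c z w : ℂ} (hc : ‖c‖ < 1) (hz : ‖z‖ < 1) (hw : ‖w‖ < 1) :
    ‖mobius (mobius c z) (mobius c w)‖ = ‖mobius z w‖ := by
  have hcz := one_sub_conj_mul_ne_zero hc hz.le
  rw [mobius_mobius hc hz hw, norm_mul, norm_neg, norm_div, norm_one_sub_mul_conj,
    div_self (norm_ne_zero_iff.mpr hcz), mul_one]

theorem add_eq_zero_of_norm_mobius_eq {A B : ℂ} {t : ℝ} (hA : ‖A‖ = t) (hB : ‖B‖ = t)
    (ht : t < 1) (hAB : ‖mobius A B‖ = 2 * t / (1 + t ^ 2)) : A + B = 0 := by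
  have ht0 : 0 ≤ t := hA ▸ norm_nonneg A
  have hden : 1 - conj A * B ≠ 0 := one_sub_conj_mul_ne_zero (hA ▸ ht) (hB ▸ ht).le
  rw [mobius, norm_div, div_eq_div_iff (norm_ne_zero_iff.mpr hden) (by positivity)] at hAB
  set c := (A * conj B).re
  have hsq : normSq (A - B) * (1 + t ^ 2) ^ 2 = 4 * t ^ 2 * normSq (1 - conj A * B) := by
    rw [← Complex.sq_norm, ← Complex.sq_norm]
    linear_combination (‖A - B‖ * (1 + t ^ 2) + 2 * t * ‖1 - conj A * B‖) * hAB
  have hsub : normSq (A - B) = 2 * t ^ 2 - 2 * c := by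
    rw [normSq_sub, normSq_eq_norm_sq, normSq_eq_norm_sq, hA, hB]
    ring
  have hone : normSq (1 - conj A * B) = 1 + t ^ 4 - 2 * c := by
    rw [normSq_sub, normSq_one, normSq_mul, normSq_conj, normSq_eq_norm_sq, normSq_eq_norm_sq,
      hA, hB]
    simp only [one_mul, map_mul, conj_conj]
    ring
  -- `Re (A * conj B) = -‖A‖ ‖B‖` is the equality case of Cauchy–Schwarz with opposite directions
  have hc : (c + t ^ 2) * (1 - t ^ 2) ^ 2 = 0 := by
    linear_combination (-1 / 2 : ℝ) * hsq + (1 + t ^ 2) ^ 2 / 2 * hsub - 2 * t ^ 2 * hone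
  have ht2 : (1 - t ^ 2) ^ 2 ≠ 0 := by
    have : t ^ 2 < 1 := pow_lt_one₀ ht0 ht two_ne_zero
    positivity
  rw [← normSq_eq_zero, normSq_add, normSq_eq_norm_sq, normSq_eq_norm_sq, hA, hB]
  linear_combination 2 * (mul_eq_zero.mp hc).resolve_right ht2

def IsHyperbolicMidpoint (a b m : ℂ) : Prop :=
  ‖m‖ < 1 ∧ poincareDist a m = poincareDist m b ∧
    poincareDist a m + poincareDist m b = poincareDist a b

/-- `r / (1 + r² + √…)` is the smaller root `k` of `r ‖x + y‖² k² - 2 (1 + r²) k + r = 0`,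
written so that it stays continuous where `x + y = 0`. -/
noncomputable def scaledMidpoint (x y : ℂ) (r : ℝ) : ℂ :=
  ((r / (1 + r ^ 2 + √((1 + r ^ 2) ^ 2 - r ^ 2 * ‖x + y‖ ^ 2)) : ℝ) : ℂ) * (x + y)

namespace IsHyperbolicMidpoint

variable {a b m : ℂ}

theorem mobius_add_mobius_eq_zero (ha : ‖a‖ < 1) (hb : ‖b‖ < 1)
    (h : IsHyperbolicMidpoint a b m) : mobius m a + mobius m b = 0 := by
  obtain ⟨hm, hequi, hadd⟩ := h
  set t := ‖mobius m b‖
  have ht : t ∈ Ioo (-1) 1 := norm_mobius_mem_Ioo hm hb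
  have hma : ‖mobius a m‖ = t :=
    arctanh_strictMonoOn.injOn (norm_mobius_mem_Ioo ha hm) ht hequi
  have hab : ‖mobius a b‖ = 2 * t / (1 + t ^ 2) := by
    refine arctanh_strictMonoOn.injOn (norm_mobius_mem_Ioo ha hb)
      (by simpa only [← two_mul, ← sq] using add_div_one_add_mul_mem_Ioo ht ht) ?_
    change arctanh ‖mobius a m‖ + arctanh t = arctanh ‖mobius a b‖ at hadd
    rw [← hadd, hma, arctanh_add ht ht, ← two_mul, ← sq]
  refine add_eq_zero_of_norm_mobius_eq (by rw [norm_mobius_comm, hma]) rfl ht.2 ?_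
  rw [norm_mobius_mobius hm ha hb, hab]

theorem two_mul_add_mul_conj_eq (ha : ‖a‖ < 1) (hb : ‖b‖ < 1)
    (h : IsHyperbolicMidpoint a b m) :
    2 * m + 2 * (a * b) * conj m = (1 + conj m * m) * (a + b) := by
  have hma := one_sub_conj_mul_ne_zero h.1 ha.le
  have hmb := one_sub_conj_mul_ne_zero h.1 hb.le
  have hsum := h.mobius_add_mobius_eq_zero ha hb
  rw [mobius, mobius, div_add_div _ _ hma hmb, div_eq_zero_iff] at hsum
  linear_combination hsum.resolve_right (mul_ne_zero hma hmb)

variable {x y : ℂ} {r : ℝ}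

theorem eq_ofReal_mul_add (hx : ‖x‖ = 1) (hy : ‖y‖ = 1) (hr : |r| < 1)
    (h : IsHyperbolicMidpoint (r * x) (r * y) m) :
    m = ((r * (1 + ‖m‖ ^ 2) / (2 * (1 + r ^ 2)) : ℝ) : ℂ) * (x + y) := by
  have hnorm : ∀ z : ℂ, ‖z‖ ≤ 1 → ‖(r : ℂ) * z‖ < 1 := fun z hz => by
    rw [norm_mul, norm_real, Real.norm_eq_abs]
    exact mul_lt_one_of_nonneg_of_lt_one_left (abs_nonneg r) hr hz
  have hxc : conj x * x = 1 := by rw [conj_mul', hx]; norm_num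
  have hyc : conj y * y = 1 := by rw [conj_mul', hy]; norm_num
  have E := h.two_mul_add_mul_conj_eq (hnorm x hx.le) (hnorm y hy.le)
  have E' := congrArg conj E
  simp only [map_add, map_mul, map_ofNat, conj_ofReal, conj_conj, map_one] at E'
  have hr2 : (1 - r ^ 2 : ℂ) ≠ 0 := by
    have : r ^ 2 < 1 := by rwa [sq_lt_one_iff_abs_lt_one]
    exact_mod_cast (by linarith : (1 - r ^ 2 : ℝ) ≠ 0)
  have hden : (2 * (1 + r ^ 2) : ℂ) ≠ 0 := by
    exact_mod_cast (by positivity : (2 * (1 + r ^ 2) : ℝ) ≠ 0)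
  push_cast
  rw [← conj_mul', div_mul_eq_mul_div, eq_div_iff hden]
  apply mul_left_cancel₀ hr2
  linear_combination E - r ^ 2 * x * y * E'
    + (2 * r ^ 4 * m * (conj y * y) - (1 + conj m * m) * r ^ 3 * y) * hxc
    + (2 * r ^ 4 * m - (1 + conj m * m) * r ^ 3 * x) * hyc

theorem eq_scaledMidpoint (hx : ‖x‖ = 1) (hy : ‖y‖ = 1) (hr₀ : 0 ≤ r) (hr₁ : r < 1)
    (h : IsHyperbolicMidpoint (r * x) (r * y) m) : m = scaledMidpoint x y r := by
  have hm := h.eq_ofReal_mul_add hx hy (by rwa [abs_of_nonneg hr₀])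
  set k := r * (1 + ‖m‖ ^ 2) / (2 * (1 + r ^ 2)) with hk
  have hk₀ : 0 ≤ k := by positivity
  clear_value k
  set N := ‖x + y‖
  have hnorm : ‖m‖ = k * N := by
    rw [hm, norm_mul, norm_real, Real.norm_of_nonneg hk₀]
  have hquad : 2 * (1 + r ^ 2) * k = r * (1 + k ^ 2 * N ^ 2) := by
    rw [← mul_pow, ← hnorm, hk]
    field_simp
  have hN : N ≤ 2 := (norm_add_le x y).trans (by rw [hx, hy]; norm_num)
  have hroot : 0 ≤ 1 + r ^ 2 - r * N ^ 2 * k := by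
    have hNm : N * ‖m‖ ≤ 2 * 1 := mul_le_mul hN h.1.le (norm_nonneg m) zero_le_two
    have : r * N ^ 2 * k = r * (N * ‖m‖) := by rw [hnorm]; ring
    nlinarith [mul_le_mul_of_nonneg_left hNm hr₀, sq_nonneg (1 - r)]
  have hsqrt : √((1 + r ^ 2) ^ 2 - r ^ 2 * N ^ 2) = 1 + r ^ 2 - r * N ^ 2 * k := by
    rw [← Real.sqrt_sq hroot]
    congr 1
    linear_combination r * N ^ 2 * hquad
  rw [scaledMidpoint, hm, hsqrt]
  congr 2
  rw [eq_div_iff (by nlinarith)]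
  linear_combination hquad

end IsHyperbolicMidpoint

theorem continuous_scaledMidpoint (x y : ℂ) : Continuous (scaledMidpoint x y) := by
  unfold scaledMidpoint
  fun_prop (disch := intro r; positivity)

theorem norm_scaledMidpoint_one_lt_one {x y : ℂ} (hx : ‖x‖ = 1) (hy : ‖y‖ = 1) (hxy : x ≠ y) :
    ‖scaledMidpoint x y 1‖ < 1 := by
  have hpar := parallelogram_law_with_norm ℝ x y
  rw [hx, hy] at hpar
  have hsqrt : √((1 + 1 ^ 2) ^ 2 - 1 ^ 2 * ‖x + y‖ ^ 2) = ‖x - y‖ := by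
    rw [← Real.sqrt_sq (norm_nonneg (x - y))]
    congr 1
    linear_combination -hpar
  have hxy' : 0 < ‖x - y‖ := norm_pos_iff.mpr (sub_ne_zero.mpr hxy)
  have hN : ‖x + y‖ ≤ 2 := (norm_add_le x y).trans (by rw [hx, hy]; norm_num)
  rw [scaledMidpoint, hsqrt, norm_mul, norm_real, Real.norm_of_nonneg (by positivity),
    div_mul_eq_mul_div, one_mul, div_lt_one (by positivity)]
  linarith

/-- For distinct points `x, y` of the unit circle, the hyperbolic midpoint of `rx` and
`ry` (the point of the disk equidistant from them and lying on the hyperbolic segment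
joining them) converges, as `r → 1⁻`, to a point of the open unit disk. -/
theorem hyperbolic_midpoint_tendsto_interior
    (x y : ℂ) (hx : ‖x‖ = 1) (hy : ‖y‖ = 1) (hxy : x ≠ y)
    (m : ℝ → ℂ)
    (hm : ∀ r ∈ Ioo (0 : ℝ) 1,
      ‖m r‖ < 1 ∧
      poincareDist (r * x) (m r) = poincareDist (m r) (r * y) ∧
      poincareDist (r * x) (m r) + poincareDist (m r) (r * y)
        = poincareDist (r * x) (r * y)) :
    ∃ L : ℂ, ‖L‖ < 1 ∧ Tendsto m (𝓝[<] (1 : ℝ)) (𝓝 L) := by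
  have hm_eq : m =ᶠ[𝓝[<] 1] scaledMidpoint x y := by
    filter_upwards [Ioo_mem_nhdsLT zero_lt_one] with r hr
    exact IsHyperbolicMidpoint.eq_scaledMidpoint hx hy hr.1.le hr.2 (hm r hr)
  refine ⟨scaledMidpoint x y 1, norm_scaledMidpoint_one_lt_one hx hy hxy, ?_⟩
  exact ((continuous_scaledMidpoint x y).tendsto 1).mono_left nhdsWithin_le_nhds
    |>.congr' hm_eq.symm
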